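/- For every finite simple graph G, the LD-numbers of G and of its complement Ḡ differ by at most one, i.e., γ^LD(Ḡ) ≤ γ^LD(G) + 1 and γ^LD(G) ≤ γ^LD(Ḡ) + 1. -/

import Mathlib

open Finset

namespace SepDom

variable {V : Type*} [Fintype V] [DecidableEq V]

/-- The closed neighborhood `N[v]` of a vertex as a `Finset`. -/
def closedNbhd (G : SimpleGraph V) [DecidableRel G.Adj] (v : V) : Finset V :=
  insert v (G.neighborFinset v)

/-- `C` is a dominating set: `N[v] ∩ C ≠ ∅` for all `v`. -/
def IsDomSet (G : SimpleGraph V) [DecidableRel G.Adj] (C : Finset V) : Prop :=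
  ∀ v : V, (closedNbhd G v ∩ C).Nonempty

/-- `C` is a total-dominating set: `N(v) ∩ C ≠ ∅` for all `v`. -/
def IsTotalDomSet (G : SimpleGraph V) [DecidableRel G.Adj] (C : Finset V) : Prop :=
  ∀ v : V, (G.neighborFinset v ∩ C).Nonempty

/-- `C` is a locating set (L-set): the sets `N(v) ∩ C`, `v ∉ C`, are pairwise distinct. -/
def IsLSet (G : SimpleGraph V) [DecidableRel G.Adj] (C : Finset V) : Prop :=
  ∀ u ∉ C, ∀ v ∉ C, G.neighborFinset u ∩ C = G.neighborFinset v ∩ C → u = v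

/-- `C` is an open-separating set (O-set): the sets `N(v) ∩ C` are pairwise distinct. -/
def IsOSet (G : SimpleGraph V) [DecidableRel G.Adj] (C : Finset V) : Prop :=
  ∀ u v : V, G.neighborFinset u ∩ C = G.neighborFinset v ∩ C → u = v

/-- `C` is a closed-separating set (I-set): the sets `N[v] ∩ C` are pairwise distinct. -/
def IsISet (G : SimpleGraph V) [DecidableRel G.Adj] (C : Finset V) : Prop :=
  ∀ u v : V, closedNbhd G u ∩ C = closedNbhd G v ∩ C → u = v

/-- `C` is a full-separating set (F-set): both open- and closed-separating. -/
def IsFSet (G : SimpleGraph V) [DecidableRel G.Adj] (C : Finset V) : Prop :=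
  IsOSet G C ∧ IsISet G C

/-- `G` has open twins: distinct non-adjacent vertices with equal open neighborhoods. -/
def HasOpenTwins (G : SimpleGraph V) [DecidableRel G.Adj] : Prop :=
  ∃ u v : V, u ≠ v ∧ ¬ G.Adj u v ∧ G.neighborFinset u = G.neighborFinset v

/-- `G` has closed twins: distinct adjacent vertices with equal closed neighborhoods. -/
def HasClosedTwins (G : SimpleGraph V) [DecidableRel G.Adj] : Prop :=
  ∃ u v : V, u ≠ v ∧ G.Adj u v ∧ closedNbhd G u = closedNbhd G v

/-- `G` has an isolated vertex: a vertex with empty open neighborhood. -/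
def HasIsolated (G : SimpleGraph V) [DecidableRel G.Adj] : Prop :=
  ∃ v : V, G.neighborFinset v = ∅

/-- The L-number: minimum cardinality of an L-set. -/
noncomputable def lNum (G : SimpleGraph V) [DecidableRel G.Adj] : ℕ :=
  sInf {n | ∃ C : Finset V, IsLSet G C ∧ C.card = n}

/-- The O-number: minimum cardinality of an O-set. -/
noncomputable def oNum (G : SimpleGraph V) [DecidableRel G.Adj] : ℕ :=
  sInf {n | ∃ C : Finset V, IsOSet G C ∧ C.card = n}

/-- The I-number: minimum cardinality of an I-set. -/
noncomputable def iNum (G : SimpleGraph V) [DecidableRel G.Adj] : ℕ :=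
  sInf {n | ∃ C : Finset V, IsISet G C ∧ C.card = n}

/-- The F-number: minimum cardinality of an F-set. -/
noncomputable def fNum (G : SimpleGraph V) [DecidableRel G.Adj] : ℕ :=
  sInf {n | ∃ C : Finset V, IsFSet G C ∧ C.card = n}

/-- The LD-number: minimum cardinality of an LD-code. -/
noncomputable def ldNum (G : SimpleGraph V) [DecidableRel G.Adj] : ℕ :=
  sInf {n | ∃ C : Finset V, IsDomSet G C ∧ IsLSet G C ∧ C.card = n}

/-- The OD-number: minimum cardinality of an OD-code. -/
noncomputable def odNum (G : SimpleGraph V) [DecidableRel G.Adj] : ℕ :=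
  sInf {n | ∃ C : Finset V, IsDomSet G C ∧ IsOSet G C ∧ C.card = n}

/-- The ID-number: minimum cardinality of an ID-code. -/
noncomputable def idNum (G : SimpleGraph V) [DecidableRel G.Adj] : ℕ :=
  sInf {n | ∃ C : Finset V, IsDomSet G C ∧ IsISet G C ∧ C.card = n}

/-- The FD-number: minimum cardinality of an FD-code. -/
noncomputable def fdNum (G : SimpleGraph V) [DecidableRel G.Adj] : ℕ :=
  sInf {n | ∃ C : Finset V, IsDomSet G C ∧ IsFSet G C ∧ C.card = n}

/-- The LTD-number: minimum cardinality of an LTD-code. -/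
noncomputable def ltdNum (G : SimpleGraph V) [DecidableRel G.Adj] : ℕ :=
  sInf {n | ∃ C : Finset V, IsTotalDomSet G C ∧ IsLSet G C ∧ C.card = n}

/-- The OTD-number: minimum cardinality of an OTD-code. -/
noncomputable def otdNum (G : SimpleGraph V) [DecidableRel G.Adj] : ℕ :=
  sInf {n | ∃ C : Finset V, IsTotalDomSet G C ∧ IsOSet G C ∧ C.card = n}

/-- The ITD-number: minimum cardinality of an ITD-code. -/
noncomputable def itdNum (G : SimpleGraph V) [DecidableRel G.Adj] : ℕ :=
  sInf {n | ∃ C : Finset V, IsTotalDomSet G C ∧ IsISet G C ∧ C.card = n}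

/-- The FTD-number: minimum cardinality of an FTD-code. -/
noncomputable def ftdNum (G : SimpleGraph V) [DecidableRel G.Adj] : ℕ :=
  sInf {n | ∃ C : Finset V, IsTotalDomSet G C ∧ IsFSet G C ∧ C.card = n}

end SepDom

open SepDom

/-! For `u ∉ C` the trace `N(u) ∩ C` in `Gᶜ` is the complement in `C` of the trace in `G`, so a
locating set of `G` is a locating set of `Gᶜ`. A locating set leaves at most one vertex
undominated (such a vertex has empty trace), and adding that vertex yields an LD-code. Applying
this to a minimum LD-code of `G`, and then to `Gᶜ` in place of `G`, gives both inequalities. -/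

namespace SepDom

variable {V : Type*} [Fintype V] [DecidableEq V] {G : SimpleGraph V} [DecidableRel G.Adj]

theorem IsLSet.mono {C D : Finset V} (hC : IsLSet G C) (hCD : C ⊆ D) : IsLSet G D := by
  intro u hu v hv huv
  apply hC u (fun h => hu (hCD h)) v (fun h => hv (hCD h))
  have := congrArg (· ∩ C) huv
  simpa only [inter_assoc, inter_eq_right.mpr hCD] using this

theorem isDomSet_univ : IsDomSet G univ :=
  fun v => ⟨v, by simp [closedNbhd]⟩

theorem isLSet_univ : IsLSet G univ :=
  fun u hu => absurd (mem_univ u) hu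

theorem ldNum_le {C : Finset V} (hdom : IsDomSet G C) (hloc : IsLSet G C) :
    ldNum G ≤ C.card :=
  Nat.sInf_le ⟨C, hdom, hloc, rfl⟩

theorem exists_ldCode_card_eq_ldNum :
    ∃ C : Finset V, IsDomSet G C ∧ IsLSet G C ∧ C.card = ldNum G := by
  have hne : {n | ∃ C : Finset V, IsDomSet G C ∧ IsLSet G C ∧ C.card = n}.Nonempty :=
    ⟨_, univ, isDomSet_univ, isLSet_univ, rfl⟩
  exact Nat.sInf_mem hne

theorem compl_neighborFinset_inter {C : Finset V} {u : V} (hu : u ∉ C) :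
    Gᶜ.neighborFinset u ∩ C = C \ (G.neighborFinset u ∩ C) := by
  ext w
  simp only [mem_inter, mem_sdiff, SimpleGraph.mem_neighborFinset, SimpleGraph.compl_adj]
  constructor
  · rintro ⟨⟨-, hnadj⟩, hw⟩
    exact ⟨hw, fun h => hnadj h.1⟩
  · rintro ⟨hw, hnadj⟩
    exact ⟨⟨fun h => hu (h ▸ hw), fun h => hnadj ⟨h, hw⟩⟩, hw⟩

theorem IsLSet.compl {C : Finset V} (hC : IsLSet G C) : IsLSet Gᶜ C := by
  intro u hu v hv huv
  rw [compl_neighborFinset_inter hu, compl_neighborFinset_inter hv] at huv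
  exact hC u hu v hv ((sdiff_right_inj inter_subset_right inter_subset_right).mp huv)

theorem closedNbhd_inter_eq_empty {C : Finset V} {v : V} :
    closedNbhd G v ∩ C = ∅ ↔ v ∉ C ∧ G.neighborFinset v ∩ C = ∅ := by
  by_cases hv : v ∈ C
  · simp [closedNbhd, insert_inter_of_mem hv, hv]
  · simp [closedNbhd, insert_inter_of_notMem hv, hv]

theorem IsLSet.subsingleton_undominated {C : Finset V} (hC : IsLSet G C) :
    {v | closedNbhd G v ∩ C = ∅}.Subsingleton := by
  intro u hu v hv
  obtain ⟨huC, hu⟩ := closedNbhd_inter_eq_empty.mp hu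
  obtain ⟨hvC, hv⟩ := closedNbhd_inter_eq_empty.mp hv
  exact hC u huC v hvC (hu.trans hv.symm)

theorem IsLSet.isDomSet_insert {C : Finset V} (hC : IsLSet G C) {v : V}
    (hv : closedNbhd G v ∩ C = ∅) : IsDomSet G (insert v C) := by
  intro w
  by_cases hwv : w = v
  · exact ⟨w, by simp [closedNbhd, hwv]⟩
  · by_contra hw
    refine hwv (hC.subsingleton_undominated (subset_empty.mp ?_) hv)
    exact (inter_subset_inter_left (subset_insert v C)).trans
      (not_nonempty_iff_eq_empty.mp hw).subset

theorem IsLSet.exists_ldCode {C : Finset V} (hC : IsLSet G C) :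
    ∃ D : Finset V, IsDomSet G D ∧ IsLSet G D ∧ D.card ≤ C.card + 1 := by
  by_cases hdom : IsDomSet G C
  · exact ⟨C, hdom, hC, C.card.le_succ⟩
  · obtain ⟨v, hv⟩ : ∃ v, closedNbhd G v ∩ C = ∅ := by
      simpa only [IsDomSet, not_forall, not_nonempty_iff_eq_empty] using hdom
    exact ⟨insert v C, hC.isDomSet_insert hv, hC.mono (subset_insert v C), card_insert_le v C⟩

theorem ldNum_compl_le : ldNum Gᶜ ≤ ldNum G + 1 := by
  obtain ⟨C, -, hloc, hcard⟩ := exists_ldCode_card_eq_ldNum (G := G)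
  obtain ⟨D, hdomD, hlocD, hD⟩ := hloc.compl.exists_ldCode
  exact hcard ▸ (ldNum_le hdomD hlocD).trans hD

end SepDom

theorem ld_compl_diff_le_one {V : Type*} [Fintype V] [DecidableEq V]
    (G : SimpleGraph V) [DecidableRel G.Adj] :
    ldNum Gᶜ ≤ ldNum G + 1 ∧ ldNum G ≤ ldNum Gᶜ + 1 := by
  refine ⟨ldNum_compl_le, ?_⟩
  convert ldNum_compl_le (G := Gᶜ) using 2
  exact (compl_compl G).symm
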